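/- arXiv:2508.15938 — 4 statements merged into one kernel-verified Lean document; each statement's English description precedes it below -/
import Mathlib

section
/- Let r > 2, α ≥ 0, and k₁, k₂ ∈ ℕ. Then Σ_{i=0}^∞ ((α)_i (α)_{k₁+k₂+i} / r^{2i+k₁+k₂}) Σ_{j=0}^{i} 1/(j!(i−j)!(k₁+i−j)!(k₂+j)!) = (1/r^{k₁+k₂}) · ((α)_{k₁+k₂}/(k₁! k₂!)) · ₄F₃(α, α+k₁+k₂, (k₁+k₂)/2 + 1, (k₁+k₂+1)/2; k₁+k₂+1, k₁+1, k₂+1; 4/r²), with both series absolutely convergent. -/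
open scoped BigOperators

/-- The (rising) Pochhammer symbol `(a)_n` for a real number `a`. -/
noncomputable def poch (a : ℝ) (n : ℕ) : ℝ := (ascPochhammer ℝ n).eval a

/-- The `n`-th term of the generalized hypergeometric series `₄F₃`. -/
noncomputable def F43term (a₁ a₂ a₃ a₄ b₁ b₂ b₃ x : ℝ) (n : ℕ) : ℝ :=
  (poch a₁ n * poch a₂ n * poch a₃ n * poch a₄ n) /
      (poch b₁ n * poch b₂ n * poch b₃ n * (n.factorial : ℝ)) * x ^ n

/-- The generalized hypergeometric series `₄F₃(a₁,a₂,a₃,a₄; b₁,b₂,b₃; x)`. -/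
noncomputable def F43 (a₁ a₂ a₃ a₄ b₁ b₂ b₃ x : ℝ) : ℝ :=
  ∑' n : ℕ, F43term a₁ a₂ a₃ a₄ b₁ b₂ b₃ x n


section Aux
open Filter Topology

lemma poch_succ (a : ℝ) (n : ℕ) : poch a (n + 1) = poch a n * (a + n) :=
  ascPochhammer_succ_eval n a

lemma poch_add (a : ℝ) (n m : ℕ) : poch a (n + m) = poch a n * poch (a + n) m := by
  have h := congrArg (Polynomial.eval a) (ascPochhammer_mul (S := ℝ) n m)
  simpa [poch, Polynomial.eval_comp] using h.symm

lemma poch_pos {a : ℝ} (ha : 0 < a) (n : ℕ) : 0 < poch a n :=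
  ascPochhammer_pos n a ha

lemma poch_zero_eval {n : ℕ} (hn : n ≠ 0) : poch 0 n = 0 := by
  obtain ⟨m, rfl⟩ := Nat.exists_eq_succ_of_ne_zero hn
  simp [poch, ascPochhammer_succ_left, Polynomial.eval_comp]

lemma poch_nat (m n : ℕ) : poch ((m : ℝ) + 1) n = ((m + n).factorial : ℝ) / (m.factorial : ℝ) := by
  have h := factorial_mul_ascPochhammer ℝ m n
  rw [poch, eq_div_iff (by exact_mod_cast m.factorial_ne_zero), mul_comm]
  exact_mod_cast h

lemma poch_dup (x : ℝ) (n : ℕ) :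
    poch (x / 2) n * poch ((x + 1) / 2) n * 4 ^ n = poch x (2 * n) := by
  induction n with
  | zero => simp [poch]
  | succ n ih =>
    have h2 : 2 * (n + 1) = (2 * n + 1) + 1 := by ring
    rw [h2, poch_succ, poch_succ, poch_succ, poch_succ, ← ih]
    push_cast
    ring

lemma tend1 (a b : ℝ) : Tendsto (fun n : ℕ => (a + n) / (b + n)) atTop (𝓝 1) := by
  have hb : Tendsto (fun n : ℕ => b + (n : ℝ)) atTop atTop :=
    tendsto_atTop_add_const_left _ b tendsto_natCast_atTop_atTop
  have h0 : Tendsto (fun n : ℕ => (a - b) / (b + n)) atTop (𝓝 0) := by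
    simpa [div_eq_mul_inv] using hb.inv_tendsto_atTop.const_mul (a - b)
  have h1 : Tendsto (fun n : ℕ => 1 + (a - b) / (b + n)) atTop (𝓝 1) := by
    simpa using h0.const_add 1
  apply h1.congr'
  filter_upwards [hb.eventually_gt_atTop 0] with n hn
  field_simp
  ring

lemma choose_sum (k₁ k₂ i : ℕ) :
    ∑ j ∈ Finset.range (i + 1), i.choose j * (k₁ + k₂ + i).choose (k₂ + j)
      = (k₁ + k₂ + 2 * i).choose (k₂ + i) := by
  have h := Nat.add_choose_eq i (k₁ + k₂ + i) (k₂ + i)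
  rw [Finset.Nat.sum_antidiagonal_eq_sum_range_succ_mk] at h
  have h2 : i + (k₁ + k₂ + i) = k₁ + k₂ + 2 * i := by ring
  rw [h2] at h
  rw [h, ← Finset.sum_subset (Finset.range_subset_range.mpr (by omega) :
      Finset.range (i + 1) ⊆ Finset.range (k₂ + i + 1))]
  · rw [← Finset.sum_range_reflect]
    apply Finset.sum_congr rfl
    intro j hj
    rw [Finset.mem_range] at hj
    have hji : j ≤ i := by omega
    have e1 : i + 1 - 1 - j = i - j := by omega
    rw [e1, Nat.choose_symm hji, show k₂ + (i - j) = k₂ + i - j by omega]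
  · intro a _ ha
    rw [Finset.mem_range, not_lt] at ha
    simp [Nat.choose_eq_zero_of_lt (by omega : i < a)]

lemma inner_sum_eq (k₁ k₂ i : ℕ) :
    (∑ j ∈ Finset.range (i + 1),
        (1 : ℝ) / ((j.factorial : ℝ) * ((i - j).factorial : ℝ) *
          ((k₁ + i - j).factorial : ℝ) * ((k₂ + j).factorial : ℝ)))
      = ((k₁ + k₂ + 2 * i).choose (k₂ + i) : ℝ) /
          ((i.factorial : ℝ) * ((k₁ + k₂ + i).factorial : ℝ)) := by
  rw [← choose_sum k₁ k₂ i]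
  push_cast
  rw [Finset.sum_div]
  apply Finset.sum_congr rfl
  intro j hj
  rw [Finset.mem_range] at hj
  have hji : j ≤ i := by omega
  have e1 : i.choose j * j.factorial * (i - j).factorial = i.factorial :=
    Nat.choose_mul_factorial_mul_factorial hji
  have e2 : (k₁ + k₂ + i).choose (k₂ + j) * (k₂ + j).factorial * (k₁ + i - j).factorial
      = (k₁ + k₂ + i).factorial := by
    have h := Nat.choose_mul_factorial_mul_factorial (show k₂ + j ≤ k₁ + k₂ + i by omega)
    rwa [show k₁ + k₂ + i - (k₂ + j) = k₁ + i - j by omega] at h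
  have key : i.factorial * (k₁ + k₂ + i).factorial
      = i.choose j * (k₁ + k₂ + i).choose (k₂ + j) *
        (j.factorial * (i - j).factorial * (k₁ + i - j).factorial * (k₂ + j).factorial) := by
    rw [← e1, ← e2]; ring
  rw [div_eq_div_iff (by positivity) (by positivity), one_mul]
  exact_mod_cast key

lemma term_eq (r α : ℝ) (hr : 2 < r) (k₁ k₂ i : ℕ) :
    (poch α i * poch α (k₁ + k₂ + i)) / r ^ (2 * i + k₁ + k₂) *
        ∑ j ∈ Finset.range (i + 1),
          (1 : ℝ) / ((j.factorial : ℝ) * ((i - j).factorial : ℝ) *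
            ((k₁ + i - j).factorial : ℝ) * ((k₂ + j).factorial : ℝ))
      = (1 / r ^ (k₁ + k₂) * (poch α (k₁ + k₂) / ((k₁.factorial : ℝ) * (k₂.factorial : ℝ)))) *
        F43term α (α + k₁ + k₂) (((k₁ : ℝ) + k₂) / 2 + 1) (((k₁ : ℝ) + k₂ + 1) / 2)
          ((k₁ : ℝ) + k₂ + 1) ((k₁ : ℝ) + 1) ((k₂ : ℝ) + 1) (4 / r ^ 2) i := by
  have hr0 : (0 : ℝ) < r := by linarith
  rw [inner_sum_eq, F43term]
  -- split α-pochhammer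
  have hpa : poch α (k₁ + k₂ + i) = poch α (k₁ + k₂) * poch (α + k₁ + k₂) i := by
    have h := poch_add α (k₁ + k₂) i
    rwa [show α + ((k₁ + k₂ : ℕ) : ℝ) = α + k₁ + k₂ by push_cast; ring] at h
  -- duplication
  have e34 : poch (((k₁ : ℝ) + k₂) / 2 + 1) i * poch (((k₁ : ℝ) + k₂ + 1) / 2) i
      = ((k₁ + k₂ + 2 * i).factorial : ℝ) / (((k₁ + k₂).factorial : ℝ) * 4 ^ i) := by
    have h := poch_dup ((k₁ : ℝ) + k₂ + 1) i
    rw [show ((k₁ : ℝ) + k₂ + 1 + 1) / 2 = ((k₁ : ℝ) + k₂) / 2 + 1 by ring] at h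
    have h2 : poch ((k₁ : ℝ) + k₂ + 1) (2 * i)
        = ((k₁ + k₂ + 2 * i).factorial : ℝ) / ((k₁ + k₂).factorial : ℝ) := by
      have := poch_nat (k₁ + k₂) (2 * i)
      rwa [show (((k₁ + k₂ : ℕ)) : ℝ) + 1 = (k₁ : ℝ) + k₂ + 1 by push_cast; ring] at this
    rw [h2, eq_div_iff (by positivity : (((k₁ + k₂).factorial : ℝ)) ≠ 0)] at h
    rw [eq_div_iff (by positivity)]
    linear_combination h
  have hb1 : poch ((k₁ : ℝ) + k₂ + 1) i
      = ((k₁ + k₂ + i).factorial : ℝ) / ((k₁ + k₂).factorial : ℝ) := by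
    have := poch_nat (k₁ + k₂) i
    rwa [show (((k₁ + k₂ : ℕ)) : ℝ) + 1 = (k₁ : ℝ) + k₂ + 1 by push_cast; ring] at this
  have hb2 : poch ((k₁ : ℝ) + 1) i = ((k₁ + i).factorial : ℝ) / (k₁.factorial : ℝ) :=
    poch_nat k₁ i
  have hb3 : poch ((k₂ : ℝ) + 1) i = ((k₂ + i).factorial : ℝ) / (k₂.factorial : ℝ) :=
    poch_nat k₂ i
  have hc : ((k₁ + k₂ + 2 * i).choose (k₂ + i) : ℝ)
      = ((k₁ + k₂ + 2 * i).factorial : ℝ) / (((k₂ + i).factorial : ℝ) * ((k₁ + i).factorial : ℝ)) := by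
    have h := Nat.choose_mul_factorial_mul_factorial (show k₂ + i ≤ k₁ + k₂ + 2 * i by omega)
    rw [show k₁ + k₂ + 2 * i - (k₂ + i) = k₁ + i by omega] at h
    rw [eq_div_iff (by positivity), ← mul_assoc]
    exact_mod_cast h
  rw [hpa, mul_assoc (poch α i * poch (α + ↑k₁ + ↑k₂) i), e34, hb1, hb2, hb3, hc]
  rw [show 2 * i + k₁ + k₂ = 2 * i + (k₁ + k₂) by ring, pow_add, div_pow, ← pow_mul]
  have f1 : (i.factorial : ℝ) ≠ 0 := by positivity
  have f2 : ((k₁ + k₂ + i).factorial : ℝ) ≠ 0 := by positivity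
  have f3 : ((k₁ + k₂).factorial : ℝ) ≠ 0 := by positivity
  have f4 : (k₁.factorial : ℝ) ≠ 0 := by positivity
  have f5 : (k₂.factorial : ℝ) ≠ 0 := by positivity
  have f6 : ((k₂ + i).factorial : ℝ) ≠ 0 := by positivity
  have f7 : ((k₁ + i).factorial : ℝ) ≠ 0 := by positivity
  have hrne : r ≠ 0 := ne_of_gt hr0
  field_simp

lemma F43_summable (r α : ℝ) (hr : 2 < r) (hα : 0 ≤ α) (k₁ k₂ : ℕ) :
    Summable (F43term α (α + k₁ + k₂) (((k₁ : ℝ) + k₂) / 2 + 1) (((k₁ : ℝ) + k₂ + 1) / 2)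
      ((k₁ : ℝ) + k₂ + 1) ((k₁ : ℝ) + 1) ((k₂ : ℝ) + 1) (4 / r ^ 2)) := by
  have hr0 : (0 : ℝ) < r := by linarith
  rcases eq_or_lt_of_le hα with rfl | hpos
  · apply summable_of_ne_finset_zero (s := {0})
    intro n hn
    rw [Finset.mem_singleton] at hn
    rw [F43term, poch_zero_eval hn]
    simp
  · set a₂ : ℝ := α + k₁ + k₂ with ha₂
    set a₃ : ℝ := ((k₁ : ℝ) + k₂) / 2 + 1 with ha₃
    set a₄ : ℝ := ((k₁ : ℝ) + k₂ + 1) / 2 with ha₄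
    set b₁ : ℝ := (k₁ : ℝ) + k₂ + 1 with hb₁
    set b₂ : ℝ := (k₁ : ℝ) + 1 with hb₂
    set b₃ : ℝ := (k₂ : ℝ) + 1 with hb₃
    set x : ℝ := 4 / r ^ 2 with hx
    have hk₁ : (0:ℝ) ≤ k₁ := Nat.cast_nonneg _
    have hk₂ : (0:ℝ) ≤ k₂ := Nat.cast_nonneg _
    have pa₂ : 0 < a₂ := by rw [ha₂]; linarith
    have pa₃ : 0 < a₃ := by rw [ha₃]; linarith
    have pa₄ : 0 < a₄ := by rw [ha₄]; linarith
    have pb₁ : 0 < b₁ := by rw [hb₁]; linarith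
    have pb₂ : 0 < b₂ := by rw [hb₂]; linarith
    have pb₃ : 0 < b₃ := by rw [hb₃]; linarith
    have px : 0 < x := by rw [hx]; positivity
    set f := F43term α a₂ a₃ a₄ b₁ b₂ b₃ x with hf
    have hfpos : ∀ n, 0 < f n := by
      intro n
      rw [hf, F43term]
      have t1 := poch_pos hpos n
      have t2 := poch_pos pa₂ n
      have t3 := poch_pos pa₃ n
      have t4 := poch_pos pa₄ n
      have t5 := poch_pos pb₁ n
      have t6 := poch_pos pb₂ n
      have t7 := poch_pos pb₃ n
      have t8 : (0:ℝ) < n.factorial := by exact_mod_cast n.factorial_pos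
      positivity
    set g : ℕ → ℝ := fun n =>
      (α + n) / (b₁ + n) * ((a₂ + n) / (b₂ + n)) * ((a₃ + n) / (b₃ + n)) *
        ((a₄ + n) / (1 + n)) * x with hg
    have hstep : ∀ n : ℕ, f (n + 1) = f n * g n := by
      intro n
      rw [hf, hg]
      simp only [F43term]
      rw [poch_succ, poch_succ, poch_succ, poch_succ, poch_succ, poch_succ, poch_succ,
        Nat.factorial_succ]
      have t1 := (poch_pos pb₁ n).ne'
      have t2 := (poch_pos pb₂ n).ne'
      have t3 := (poch_pos pb₃ n).ne'
      have t8 : ((n.factorial : ℝ)) ≠ 0 := by positivity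
      have t9 : b₁ + n ≠ 0 := by positivity
      have t10 : b₂ + n ≠ 0 := by positivity
      have t11 : b₃ + n ≠ 0 := by positivity
      have t12 : (1:ℝ) + n ≠ 0 := by positivity
      push_cast
      field_simp
      ring
    have hglim : Tendsto g atTop (𝓝 x) := by
      have := (((((tend1 α b₁).mul (tend1 a₂ b₂)).mul (tend1 a₃ b₃)).mul
        (tend1 a₄ 1)).mul_const x)
      simpa using this
    have hratio : Tendsto (fun n => ‖f (n + 1)‖ / ‖f n‖) atTop (𝓝 x) := by
      apply hglim.congr
      intro n
      rw [Real.norm_eq_abs, Real.norm_eq_abs, abs_of_pos (hfpos _), abs_of_pos (hfpos _),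
        hstep n]
      exact (mul_div_cancel_left₀ (g n) (hfpos n).ne').symm
    have hx1 : x < 1 := by
      rw [hx, div_lt_one (by positivity)]
      nlinarith
    exact summable_of_ratio_test_tendsto_lt_one hx1
      (Eventually.of_forall fun n => (hfpos n).ne') hratio

end Aux

/-- Summation formula for `c_{k₁,k₂}`: the double series equals the `₄F₃` value,
with both series absolutely convergent. -/
theorem stmt3 (r α : ℝ) (hr : 2 < r) (hα : 0 ≤ α) (k₁ k₂ : ℕ) :
    Summable (fun i : ℕ =>
      (poch α i * poch α (k₁ + k₂ + i)) / r ^ (2 * i + k₁ + k₂) *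
        ∑ j ∈ Finset.range (i + 1),
          (1 : ℝ) / ((j.factorial : ℝ) * ((i - j).factorial : ℝ) *
            ((k₁ + i - j).factorial : ℝ) * ((k₂ + j).factorial : ℝ))) ∧
    Summable (F43term α (α + k₁ + k₂) (((k₁ : ℝ) + k₂) / 2 + 1) (((k₁ : ℝ) + k₂ + 1) / 2)
          ((k₁ : ℝ) + k₂ + 1) ((k₁ : ℝ) + 1) ((k₂ : ℝ) + 1) (4 / r ^ 2)) ∧
    (∑' i : ℕ,
      (poch α i * poch α (k₁ + k₂ + i)) / r ^ (2 * i + k₁ + k₂) *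
        ∑ j ∈ Finset.range (i + 1),
          (1 : ℝ) / ((j.factorial : ℝ) * ((i - j).factorial : ℝ) *
            ((k₁ + i - j).factorial : ℝ) * ((k₂ + j).factorial : ℝ))) =
      1 / r ^ (k₁ + k₂) * (poch α (k₁ + k₂) / ((k₁.factorial : ℝ) * (k₂.factorial : ℝ))) *
        F43 α (α + k₁ + k₂) (((k₁ : ℝ) + k₂) / 2 + 1) (((k₁ : ℝ) + k₂ + 1) / 2)
          ((k₁ : ℝ) + k₂ + 1) ((k₁ : ℝ) + 1) ((k₂ : ℝ) + 1) (4 / r ^ 2) := by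
  refine ⟨?_, F43_summable r α hr hα k₁ k₂, ?_⟩
  · rw [summable_congr (fun i => term_eq r α hr k₁ k₂ i)]
    exact (F43_summable r α hr hα k₁ k₂).mul_left _
  · rw [tsum_congr (fun i => term_eq r α hr k₁ k₂ i), tsum_mul_left, F43]
end

section
/- For all natural numbers i, k₁, k₂ one has Σ_{j=0}^{i} ((−i)_j (−k₁−i)_j)/((1)_j (k₂+1)_j) = (k₁+k₂+i+1)_i / (k₂+1)_i, where the Pochhammer symbols are evaluated at real (in particular negative integer) arguments. -/
open scoped BigOperators

lemma poch_neg_nat (n j : ℕ) :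
    poch (-(n : ℝ)) j = (-1) ^ j * (n.descFactorial j : ℝ) := by
  rw [poch, ascPochhammer_eval_neg_eq_descPochhammer,
    descPochhammer_eval_eq_descFactorial]

lemma poch_one (j : ℕ) : poch 1 j = (j.factorial : ℝ) := by
  simp [poch]

lemma poch_nat_succ (n j : ℕ) :
    poch ((n : ℝ) + 1) j = ((n + j).factorial : ℝ) / (n.factorial : ℝ) := by
  rw [eq_div_iff (by exact_mod_cast n.factorial_ne_zero), mul_comm, poch]
  exact_mod_cast factorial_mul_ascPochhammer ℝ n j

lemma natkey (i k₁ k₂ j : ℕ) (hj : j ≤ i) :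
    i.descFactorial j * (k₁ + i).descFactorial j * (k₂.factorial * (k₂ + i).factorial)
      = (k₁ + i).choose j * (k₂ + i).choose (i - j) * (i.factorial * k₂.factorial)
        * (j.factorial * (k₂ + j).factorial) := by
  have h1 : (k₁ + i).descFactorial j = j.factorial * (k₁ + i).choose j :=
    Nat.descFactorial_eq_factorial_mul_choose _ _
  have h2 : (k₂ + i).choose (i - j) * (i - j).factorial * ((k₂ + i) - (i - j)).factorial
      = (k₂ + i).factorial :=
    Nat.choose_mul_factorial_mul_factorial (by omega)
  have h3 : (i - j).factorial * i.descFactorial j = i.factorial :=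
    Nat.factorial_mul_descFactorial hj
  have h4 : (k₂ + i) - (i - j) = k₂ + j := by omega
  rw [h4] at h2
  calc i.descFactorial j * (k₁ + i).descFactorial j * (k₂.factorial * (k₂ + i).factorial)
      = (k₁ + i).descFactorial j * k₂.factorial
        * (i.descFactorial j * (k₂ + i).factorial) := by ring
    _ = (k₁ + i).descFactorial j * k₂.factorial
        * (i.descFactorial j * ((k₂ + i).choose (i - j) * (i - j).factorial
          * (k₂ + j).factorial)) := by rw [h2]
    _ = (k₁ + i).descFactorial j * k₂.factorial
        * ((k₂ + i).choose (i - j) * ((i - j).factorial * i.descFactorial j)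
          * (k₂ + j).factorial) := by ring
    _ = _ := by rw [h3, h1]; ring

lemma sum_vandermonde (i k₁ k₂ : ℕ) :
    (∑ j ∈ Finset.range (i + 1),
      ((k₁ + i).choose j * (k₂ + i).choose (i - j) : ℝ))
      = (((k₁ + i) + (k₂ + i)).choose i : ℝ) := by
  have := Nat.add_choose_eq (k₁ + i) (k₂ + i) i
  rw [Finset.Nat.sum_antidiagonal_eq_sum_range_succ_mk] at this
  rw [this]
  push_cast
  refine Finset.sum_congr rfl fun j hj => ?_
  simp only [Finset.mem_range] at hj
  congr 2 <;> omega

/-- Chu–Vandermonde–type identity: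
`Σ_{j=0}^{i} ((-i)_j (-k₁-i)_j)/((1)_j (k₂+1)_j) = (k₁+k₂+i+1)_i / (k₂+1)_i`. -/
theorem stmt5 (i k₁ k₂ : ℕ) :
    (∑ j ∈ Finset.range (i + 1),
        (poch (-(i : ℝ)) j * poch (-(k₁ : ℝ) - (i : ℝ)) j) /
          (poch 1 j * poch ((k₂ : ℝ) + 1) j)) =
      poch ((k₁ : ℝ) + (k₂ : ℝ) + (i : ℝ) + 1) i / poch ((k₂ : ℝ) + 1) i := by
  have hfac : ∀ n : ℕ, ((n.factorial : ℝ)) ≠ 0 := fun n => by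
    exact_mod_cast n.factorial_ne_zero
  have hterm : ∀ j ∈ Finset.range (i + 1),
      (poch (-(i : ℝ)) j * poch (-(k₁ : ℝ) - (i : ℝ)) j) /
        (poch 1 j * poch ((k₂ : ℝ) + 1) j)
      = ((k₁ + i).choose j * (k₂ + i).choose (i - j) : ℝ)
        * ((i.factorial : ℝ) * k₂.factorial / (k₂ + i).factorial) := by
    intro j hj
    simp only [Finset.mem_range] at hj
    have hj' : j ≤ i := by omega
    have e1 : (-(k₁ : ℝ) - (i : ℝ)) = -((k₁ + i : ℕ) : ℝ) := by push_cast; ring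
    rw [e1, poch_one, poch_nat_succ]
    have hsq : ((-1 : ℝ)) ^ j * (-1 : ℝ) ^ j = 1 := by
      rw [← pow_add]; exact Even.neg_one_pow ⟨j, rfl⟩
    have hnum : poch (-(i : ℝ)) j * poch (-((k₁ + i : ℕ) : ℝ)) j
        = (i.descFactorial j : ℝ) * ((k₁ + i).descFactorial j : ℝ) := by
      rw [poch_neg_nat, poch_neg_nat]
      calc (-1 : ℝ) ^ j * ↑(i.descFactorial j) * ((-1) ^ j * ↑((k₁ + i).descFactorial j))
          = ((-1 : ℝ) ^ j * (-1) ^ j) * (↑(i.descFactorial j) * ↑((k₁ + i).descFactorial j)) := by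
            ring
        _ = _ := by rw [hsq, one_mul]
    have hden : (j.factorial : ℝ) * ((k₂ + j).factorial / (k₂.factorial : ℝ))
        = ((j.factorial : ℝ) * (k₂ + j).factorial) / k₂.factorial := by ring
    rw [hnum, hden, div_div_eq_mul_div, ← mul_div_assoc]
    rw [div_eq_div_iff (by positivity) (by exact_mod_cast hfac (k₂ + i))]
    have h2 : (↑(i.descFactorial j) * ↑((k₁ + i).descFactorial j)
        * (↑k₂.factorial * ↑(k₂ + i).factorial) : ℝ)
        = (↑((k₁ + i).choose j) * ↑((k₂ + i).choose (i - j)) * (↑i.factorial * ↑k₂.factorial)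
          * (↑j.factorial * ↑(k₂ + j).factorial) : ℝ) := by
      exact_mod_cast natkey i k₁ k₂ j hj'
    linear_combination h2
  rw [Finset.sum_congr rfl hterm, ← Finset.sum_mul, sum_vandermonde]
  -- RHS computation
  have e2 : ((k₁ : ℝ) + (k₂ : ℝ) + (i : ℝ) + 1) = ((k₁ + k₂ + i : ℕ) : ℝ) + 1 := by push_cast; ring
  rw [e2, poch_nat_succ, poch_nat_succ]
  have hc : ((k₁ + i) + (k₂ + i)).choose i * i.factorial * (k₁ + k₂ + i).factorial
      = (k₁ + k₂ + i + i).factorial := by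
    have := Nat.choose_mul_factorial_mul_factorial (show i ≤ k₁ + k₂ + i + i by omega)
    have h4 : k₁ + k₂ + i + i - i = k₁ + k₂ + i := by omega
    rw [h4] at this
    calc ((k₁ + i) + (k₂ + i)).choose i * i.factorial * (k₁ + k₂ + i).factorial
        = (k₁ + k₂ + i + i).choose i * i.factorial * (k₁ + k₂ + i).factorial := by
          congr 3; omega
      _ = _ := this
  have hcr : (((k₁ + i) + (k₂ + i)).choose i : ℝ) * i.factorial * (k₁ + k₂ + i).factorial
      = ((k₁ + k₂ + i + i).factorial : ℝ) := by exact_mod_cast hc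
  field_simp
  linear_combination hcr
end

section
/- For all natural numbers i, k₁, k₂ one has Σ_{j=0}^{i} 1/(j!(i−j)!(k₁+i−j)!(k₂+j)!) = (k₁+k₂+i+1)_i / (i! · k₂! · (k₁+i)! · (k₂+1)_i). -/
open scoped BigOperators

lemma poch_nat_eq (n m : ℕ) :
    poch ((n : ℝ) + 1) m * (n.factorial : ℝ) = ((n + m).factorial : ℝ) := by
  induction m with
  | zero => simp [poch]
  | succ m ih =>
    rw [poch, ascPochhammer_succ_eval]
    have : (ascPochhammer ℝ m).eval ((n:ℝ)+1) = poch ((n:ℝ)+1) m := rfl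
    rw [this, show ((n:ℝ)+1+m) = ((n+m+1 : ℕ) : ℝ) by push_cast; ring]
    rw [show n + (m+1) = (n+m)+1 by ring, Nat.factorial_succ]
    push_cast
    nlinarith [ih]

lemma factorial_pos_real (n : ℕ) : ((n.factorial : ℝ)) ≠ 0 := by
  exact_mod_cast n.factorial_ne_zero

/-- `Σ_{j=0}^{i} 1/(j!(i-j)!(k₁+i-j)!(k₂+j)!) = (k₁+k₂+i+1)_i / (i! k₂! (k₁+i)! (k₂+1)_i)`. -/
theorem stmt6 (i k₁ k₂ : ℕ) :
    (∑ j ∈ Finset.range (i + 1),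
        (1 : ℝ) / ((j.factorial : ℝ) * ((i - j).factorial : ℝ) *
          ((k₁ + i - j).factorial : ℝ) * ((k₂ + j).factorial : ℝ))) =
      poch ((k₁ : ℝ) + (k₂ : ℝ) + (i : ℝ) + 1) i /
        ((i.factorial : ℝ) * (k₂.factorial : ℝ) * ((k₁ + i).factorial : ℝ) *
          poch ((k₂ : ℝ) + 1) i) := by
  -- LHS = C(k₁+k₂+2i, i) / ((k₁+i)! (k₂+i)!)
  have hL : (∑ j ∈ Finset.range (i + 1),
        (1 : ℝ) / ((j.factorial : ℝ) * ((i - j).factorial : ℝ) *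
          ((k₁ + i - j).factorial : ℝ) * ((k₂ + j).factorial : ℝ))) =
      (((k₁ + k₂ + 2*i).choose i : ℝ)) /
        (((k₁ + i).factorial : ℝ) * ((k₂ + i).factorial : ℝ)) := by
    have hv := Nat.add_choose_eq (k₁ + i) (k₂ + i) i
    rw [Finset.Nat.sum_antidiagonal_eq_sum_range_succ_mk] at hv
    have : ((k₁ + k₂ + 2*i).choose i : ℝ)
        = ∑ j ∈ Finset.range (i+1), (((k₁+i).choose j : ℝ) * ((k₂+i).choose (i-j) : ℝ)) := by
      rw [show k₁ + k₂ + 2*i = (k₁ + i) + (k₂ + i) by ring, hv]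
      push_cast
      rfl
    rw [this, Finset.sum_div]
    apply Finset.sum_congr rfl
    intro j hj
    have hji : j ≤ i := Nat.lt_succ_iff.mp (Finset.mem_range.mp hj)
    have h1 : (k₁+i).choose j * j.factorial * (k₁ + i - j).factorial = (k₁+i).factorial :=
      Nat.choose_mul_factorial_mul_factorial (le_add_left hji)
    have h2 : (k₂+i).choose (i-j) * (i-j).factorial * (k₂ + j).factorial = (k₂+i).factorial := by
      have := Nat.choose_mul_factorial_mul_factorial
        (show i - j ≤ k₂ + i from le_trans (Nat.sub_le i j) (le_add_left (le_refl i)))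
      rwa [show k₂ + i - (i - j) = k₂ + j by omega] at this
    have h1' : ((k₁+i).choose j : ℝ) * (j.factorial : ℝ) * ((k₁ + i - j).factorial : ℝ)
        = ((k₁+i).factorial : ℝ) := by exact_mod_cast congrArg (Nat.cast : ℕ → ℝ) h1
    have h2' : ((k₂+i).choose (i-j) : ℝ) * ((i-j).factorial : ℝ) * ((k₂ + j).factorial : ℝ)
        = ((k₂+i).factorial : ℝ) := by exact_mod_cast congrArg (Nat.cast : ℕ → ℝ) h2
    rw [div_eq_div_iff] <;>
      [skip;
       positivity;
       positivity]
    nlinarith [h1', h2']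
  rw [hL]
  -- RHS computation
  have p1 : poch ((k₁ : ℝ) + (k₂ : ℝ) + (i : ℝ) + 1) i * ((k₁ + k₂ + i).factorial : ℝ)
      = ((k₁ + k₂ + 2*i).factorial : ℝ) := by
    have := poch_nat_eq (k₁ + k₂ + i) i
    rw [show ((k₁ + k₂ + i : ℕ) : ℝ) + 1 = (k₁ : ℝ) + (k₂ : ℝ) + (i : ℝ) + 1 by push_cast; ring,
      show k₁ + k₂ + i + i = k₁ + k₂ + 2*i by ring] at this
    exact this
  have p2 : poch ((k₂ : ℝ) + 1) i * (k₂.factorial : ℝ) = ((k₂ + i).factorial : ℝ) :=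
    poch_nat_eq k₂ i
  have hc : (k₁+k₂+2*i).choose i * i.factorial * (k₁ + k₂ + i).factorial
      = (k₁+k₂+2*i).factorial := by
    have := Nat.choose_mul_factorial_mul_factorial
      (show i ≤ k₁ + k₂ + 2*i by omega)
    rwa [show k₁ + k₂ + 2*i - i = k₁ + k₂ + i by omega] at this
  have hc' : ((k₁+k₂+2*i).choose i : ℝ) * (i.factorial : ℝ) * ((k₁ + k₂ + i).factorial : ℝ)
      = ((k₁+k₂+2*i).factorial : ℝ) := by exact_mod_cast congrArg (Nat.cast : ℕ → ℝ) hc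
  have hp2pos : poch ((k₂ : ℝ) + 1) i ≠ 0 := by
    intro h
    rw [h, zero_mul] at p2
    exact factorial_pos_real (k₂+i) p2.symm
  have key : poch ((k₁ : ℝ) + (k₂ : ℝ) + (i : ℝ) + 1) i
      = ((k₁+k₂+2*i).choose i : ℝ) * (i.factorial : ℝ) :=
    mul_right_cancel₀ (factorial_pos_real (k₁+k₂+i)) (p1.trans hc'.symm)
  rw [div_eq_div_iff]
  · rw [key, ← p2]; ring
  · positivity
  · have := factorial_pos_real i
    have := factorial_pos_real k₂
    have := factorial_pos_real (k₁+i)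
    positivity
end

section
/- For α = 3 and r = 3 the strict inequality 2(α/r)·₃F₂(α, α+1, 3/2; 2, 2; 4/r²) > ₃F₂(α, α, 1/2; 1, 1; 4/r²) + (α²/r²)·₃F₂(α+1, α+1, 3/2; 2, 3; 4/r²) holds; explicitly, 2·₃F₂(3, 4, 3/2; 2, 2; 4/9) > ₃F₂(3, 3, 1/2; 1, 1; 4/9) + ₃F₂(4, 4, 3/2; 2, 3; 4/9). -/
open scoped BigOperators

/-- The generalized hypergeometric series `₃F₂(a₁,a₂,a₃; b₁,b₂; x)`. -/
noncomputable def F32 (a₁ a₂ a₃ b₁ b₂ x : ℝ) : ℝ :=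
  ∑' n : ℕ, (poch a₁ n * poch a₂ n * poch a₃ n) /
      (poch b₁ n * poch b₂ n * (n.factorial : ℝ)) * x ^ n

namespace Stmt18Aux

lemma poch_zero (a : ℝ) : poch a 0 = 1 := by simp [poch]

lemma poch_succ (a : ℝ) (n : ℕ) : poch a (n + 1) = poch a n * (a + n) := by
  simp [poch, ascPochhammer_succ_eval]

lemma poch_pos {a : ℝ} (ha : 0 < a) (n : ℕ) : 0 < poch a n := by
  induction n with
  | zero => simp [poch_zero]
  | succ n ih => rw [poch_succ]; positivity

/-- `c n = (1/2)_n`. -/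
noncomputable def c (n : ℕ) : ℝ := poch (1 / 2) n

lemma c_pos (n : ℕ) : 0 < c n := poch_pos (by norm_num) n

lemma c_succ (n : ℕ) : c (n + 1) = c n * (1 / 2 + n) := poch_succ _ n

lemma fact_succ_cast (m : ℕ) : ((m + 1).factorial : ℝ) = ((m : ℝ) + 1) * m.factorial := by
  rw [Nat.factorial_succ]; push_cast; ring

/-- common prefactor -/
noncomputable def g (n : ℕ) : ℝ := c n * (4 / 9) ^ n / n.factorial

lemma g_pos (n : ℕ) : 0 < g n := by
  have h1 := c_pos n
  have h2 : (0:ℝ) < n.factorial := by positivity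
  unfold g; positivity

lemma g_succ (n : ℕ) : g (n + 1) = g n * ((1 / 2 + n) * (4 / 9) / (n + 1)) := by
  have h : ((n.factorial : ℝ)) ≠ 0 := by positivity
  have hn1 : ((n : ℝ) + 1) ≠ 0 := by positivity
  rw [g, g, c_succ, pow_succ, fact_succ_cast]
  field_simp

lemma poch_one (n : ℕ) : poch 1 n = n.factorial := by
  induction n with
  | zero => simp [poch_zero]
  | succ n ih => rw [poch_succ, ih, fact_succ_cast]; ring

lemma poch_two (n : ℕ) : poch 2 n = (n + 1).factorial := by
  induction n with
  | zero => simp [poch_zero]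
  | succ n ih =>
      rw [poch_succ, ih, fact_succ_cast (n + 1), fact_succ_cast n]; push_cast; ring

lemma poch_three (n : ℕ) : poch 3 n = (n + 2).factorial / 2 := by
  induction n with
  | zero => simp [poch_zero]
  | succ n ih =>
      rw [poch_succ, ih, show n + 1 + 2 = (n + 2) + 1 from rfl, fact_succ_cast (n + 2)]
      push_cast; ring

lemma poch_four (n : ℕ) : poch 4 n = (n + 3).factorial / 6 := by
  induction n with
  | zero => simp [poch_zero]; norm_num [Nat.factorial]
  | succ n ih =>
      rw [poch_succ, ih, show n + 1 + 3 = (n + 3) + 1 from rfl, fact_succ_cast (n + 3)]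
      push_cast; ring

lemma poch_threehalf (n : ℕ) : poch (3 / 2) n = (2 * n + 1) * c n := by
  induction n with
  | zero => simp [poch_zero, c]
  | succ n ih =>
      rw [poch_succ, ih, c_succ]; push_cast; ring

/-- summand of `F32 3 4 (3/2) 2 2 (4/9)` -/
noncomputable def tL (n : ℕ) : ℝ :=
  poch 3 n * poch 4 n * poch (3 / 2) n /
      (poch 2 n * poch 2 n * (n.factorial : ℝ)) * (4 / 9) ^ n

/-- summand of `F32 3 3 (1/2) 1 1 (4/9)` -/
noncomputable def tA (n : ℕ) : ℝ :=
  poch 3 n * poch 3 n * poch (1 / 2) n /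
      (poch 1 n * poch 1 n * (n.factorial : ℝ)) * (4 / 9) ^ n

/-- summand of `F32 4 4 (3/2) 2 3 (4/9)` -/
noncomputable def tB (n : ℕ) : ℝ :=
  poch 4 n * poch 4 n * poch (3 / 2) n /
      (poch 2 n * poch 3 n * (n.factorial : ℝ)) * (4 / 9) ^ n

lemma fact_cast_two (n : ℕ) :
    ((n + 2).factorial : ℝ) = ((n : ℝ) + 2) * (((n : ℝ) + 1) * n.factorial) := by
  rw [show n + 2 = (n + 1) + 1 from rfl, fact_succ_cast (n + 1), fact_succ_cast n]
  push_cast; ring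

lemma fact_cast_three (n : ℕ) :
    ((n + 3).factorial : ℝ) = ((n : ℝ) + 3) * (((n : ℝ) + 2) * (((n : ℝ) + 1) * n.factorial)) := by
  rw [show n + 3 = (n + 2) + 1 from rfl, fact_succ_cast (n + 2), fact_cast_two]
  push_cast; ring

lemma cfA (n : ℕ) : tA n = g n * (((n : ℝ) + 1) ^ 2 * ((n : ℝ) + 2) ^ 2 / 4) := by
  have h : ((n.factorial : ℝ)) ≠ 0 := by positivity
  rw [tA, poch_three, poch_one, g]
  show _ * _ * c n / _ * _ = _
  rw [fact_cast_two]
  field_simp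
  ring

lemma cfL (n : ℕ) :
    tL n = g n * ((2 * (n : ℝ) + 1) * ((n : ℝ) + 2) ^ 2 * ((n : ℝ) + 3) / 12) := by
  have h : ((n.factorial : ℝ)) ≠ 0 := by positivity
  rw [tL, poch_three, poch_four, poch_two, poch_threehalf, g, fact_cast_three, fact_cast_two,
    fact_succ_cast]
  have hn1 : ((n : ℝ) + 1) ≠ 0 := by positivity
  field_simp
  ring

lemma cfB (n : ℕ) :
    tB n = g n * ((2 * (n : ℝ) + 1) * ((n : ℝ) + 2) * ((n : ℝ) + 3) ^ 2 / 18) := by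
  have h : ((n.factorial : ℝ)) ≠ 0 := by positivity
  rw [tB, poch_three, poch_four, poch_two, poch_threehalf, g, fact_cast_three, fact_cast_two,
    fact_succ_cast]
  have hn1 : ((n : ℝ) + 1) ≠ 0 := by positivity
  have hn2 : ((n : ℝ) + 2) ≠ 0 := by positivity
  field_simp
  ring

/-- the difference sequence -/
noncomputable def Dt (n : ℕ) : ℝ := 2 * tL n - tA n - tB n

lemma cfD (n : ℕ) :
    Dt n = g n * ((n : ℝ) * ((n : ℝ) + 2) * (9 + 4 * (n : ℝ) - (n : ℝ) ^ 2) / 36) := by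
  rw [Dt, cfA, cfL, cfB]; ring

lemma tL_pos (n : ℕ) : 0 < tL n := by
  rw [cfL]; have := g_pos n; positivity

lemma tA_pos (n : ℕ) : 0 < tA n := by
  rw [cfA]; have := g_pos n; positivity

lemma tB_pos (n : ℕ) : 0 < tB n := by
  rw [cfB]; have := g_pos n; positivity

lemma ratio_core {P P' : ℝ} (n : ℕ)
    (h : (1 / 2 + (n : ℝ)) * (4 / 9) * P' ≤ 8 / 9 * ((n : ℝ) + 1) * P) :
    g (n + 1) * P' ≤ 8 / 9 * (g n * P) := by
  rw [g_succ]
  have hg := g_pos n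
  have hn1 : (0:ℝ) < (n:ℝ) + 1 := by positivity
  calc g n * ((1 / 2 + (n : ℝ)) * (4 / 9) / ((n : ℝ) + 1)) * P'
      = g n * ((1 / 2 + (n : ℝ)) * (4 / 9) * P' / ((n : ℝ) + 1)) := by ring
    _ ≤ g n * (8 / 9 * ((n : ℝ) + 1) * P / ((n : ℝ) + 1)) := by
        refine mul_le_mul_of_nonneg_left ?_ hg.le
        exact div_le_div_of_nonneg_right h hn1.le
    _ = 8 / 9 * (g n * P) := by field_simp
  
lemma summable_tA : Summable tA := by
  apply summable_of_ratio_norm_eventually_le (r := 8 / 9) (by norm_num)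
  filter_upwards [Filter.eventually_ge_atTop 3] with n hn
  have hn' : (3:ℝ) ≤ (n:ℝ) := by exact_mod_cast hn
  rw [Real.norm_eq_abs, Real.norm_eq_abs, abs_of_pos (tA_pos _), abs_of_pos (tA_pos _),
    cfA, cfA]
  push_cast
  apply ratio_core
  have key : (2 * (n:ℝ) + 1) * ((n:ℝ) + 3) ^ 2 ≤ 4 * ((n:ℝ) + 1) ^ 3 := by
    nlinarith [mul_nonneg (by linarith : (0:ℝ) ≤ (n:ℝ) - 3)
      (by positivity : (0:ℝ) ≤ 2 * (n:ℝ) ^ 2 + 5 * (n:ℝ) + 3)]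
  nlinarith [mul_le_mul_of_nonneg_right key (sq_nonneg ((n:ℝ) + 2))]

lemma summable_tL : Summable tL := by
  apply summable_of_ratio_norm_eventually_le (r := 8 / 9) (by norm_num)
  filter_upwards [Filter.eventually_ge_atTop 3] with n hn
  have hn' : (3:ℝ) ≤ (n:ℝ) := by exact_mod_cast hn
  rw [Real.norm_eq_abs, Real.norm_eq_abs, abs_of_pos (tL_pos _), abs_of_pos (tL_pos _),
    cfL, cfL]
  push_cast
  apply ratio_core
  have key : (2 * (n:ℝ) + 3) * ((n:ℝ) + 3) * ((n:ℝ) + 4) ≤ 4 * ((n:ℝ) + 1) * ((n:ℝ) + 2) ^ 2 := by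
    nlinarith [mul_nonneg (by linarith : (0:ℝ) ≤ (n:ℝ) - 3)
      (by positivity : (0:ℝ) ≤ 2 * (n:ℝ) ^ 2 + 9 * (n:ℝ) + 14)]
  have hpos : (0:ℝ) ≤ (2 * (n:ℝ) + 1) * ((n:ℝ) + 3) := by positivity
  nlinarith [mul_le_mul_of_nonneg_left key hpos]

lemma summable_tB : Summable tB := by
  apply summable_of_ratio_norm_eventually_le (r := 8 / 9) (by norm_num)
  filter_upwards [Filter.eventually_ge_atTop 3] with n hn
  have hn' : (3:ℝ) ≤ (n:ℝ) := by exact_mod_cast hn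
  rw [Real.norm_eq_abs, Real.norm_eq_abs, abs_of_pos (tB_pos _), abs_of_pos (tB_pos _),
    cfB, cfB]
  push_cast
  apply ratio_core
  have key : (2 * (n:ℝ) + 3) * ((n:ℝ) + 4) ^ 2 ≤ 4 * ((n:ℝ) + 1) * ((n:ℝ) + 2) * ((n:ℝ) + 3) := by
    nlinarith [mul_nonneg (by linarith : (0:ℝ) ≤ (n:ℝ) - 3)
      (by positivity : (0:ℝ) ≤ 2 * (n:ℝ) ^ 2 + 11 * (n:ℝ) + 21)]
  have hpos : (0:ℝ) ≤ (2 * (n:ℝ) + 1) * ((n:ℝ) + 3) := by positivity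
  nlinarith [mul_le_mul_of_nonneg_left key hpos]

lemma summable_D : Summable Dt :=
  ((summable_tL.mul_left 2).sub summable_tA).sub summable_tB

/-- tail decay: for `n ≥ 8`, `-Dt (n+1) ≤ (5/6) * (-Dt n)`. -/
lemma tail_step {n : ℕ} (hn : 8 ≤ n) : -Dt (n + 1) ≤ 5 / 6 * -Dt n := by
  have hn' : (8:ℝ) ≤ (n:ℝ) := by exact_mod_cast hn
  rw [cfD, cfD, g_succ]
  have hg := g_pos n
  have hn1 : (0:ℝ) < (n:ℝ) + 1 := by positivity
  set N := (n : ℝ) with hN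
  push_cast
  have inner : (1 / 2 + N) * (4 / 9) *
      -((N + 1) * (N + 1 + 2) * (9 + 4 * (N + 1) - (N + 1) ^ 2) / 36) ≤
      5 / 6 * -(N * (N + 2) * (9 + 4 * N - N ^ 2) / 36) * (N + 1) := by
    have hq : (0:ℝ) ≤ 14 * N ^ 3 + 28 * N ^ 2 - 6 * N + 132 := by nlinarith
    nlinarith [mul_nonneg (by linarith : (0:ℝ) ≤ N - 8) hq]
  calc -(g n * ((1 / 2 + N) * (4 / 9) / (N + 1)) *
        ((N + 1) * (N + 1 + 2) * (9 + 4 * (N + 1) - (N + 1) ^ 2) / 36))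
      = g n * (((1 / 2 + N) * (4 / 9) *
          -((N + 1) * (N + 1 + 2) * (9 + 4 * (N + 1) - (N + 1) ^ 2) / 36)) / (N + 1)) := by
        ring
    _ ≤ g n * ((5 / 6 * -(N * (N + 2) * (9 + 4 * N - N ^ 2) / 36) * (N + 1)) / (N + 1)) := by
        refine mul_le_mul_of_nonneg_left (div_le_div_of_nonneg_right inner hn1.le) hg.le
    _ = 5 / 6 * -(g n * (N * (N + 2) * (9 + 4 * N - N ^ 2) / 36)) := by
        field_simp

lemma tail_bound (m : ℕ) : -Dt (m + 8) ≤ -Dt 8 * (5 / 6) ^ m := by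
  induction m with
  | zero => simp
  | succ m ih =>
      have h1 : -Dt (m + 8 + 1) ≤ 5 / 6 * -Dt (m + 8) := tail_step (by omega)
      have h2 : (m + 1) + 8 = (m + 8) + 1 := by omega
      rw [h2]
      calc -Dt (m + 8 + 1) ≤ 5 / 6 * -Dt (m + 8) := h1
        _ ≤ 5 / 6 * (-Dt 8 * (5 / 6) ^ m) := by linarith
        _ = -Dt 8 * (5 / 6) ^ (m + 1) := by ring

lemma g0 : g 0 = 1 := by simp [g, c, poch_zero]
lemma g1 : g 1 = 2 / 9 := by rw [show g 1 = g (0 + 1) from rfl, g_succ, g0]; norm_num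
lemma g2 : g 2 = 2 / 27 := by rw [show (2:ℕ) = 1 + 1 from rfl, g_succ, g1]; norm_num
lemma g3 : g 3 = 20 / 729 := by rw [show (3:ℕ) = 2 + 1 from rfl, g_succ, g2]; norm_num
lemma g4 : g 4 = 70 / 6561 := by rw [show (4:ℕ) = 3 + 1 from rfl, g_succ, g3]; norm_num
lemma g5 : g 5 = 28 / 6561 := by rw [show (5:ℕ) = 4 + 1 from rfl, g_succ, g4]; norm_num
lemma g6 : g 6 = 308 / 177147 := by rw [show (6:ℕ) = 5 + 1 from rfl, g_succ, g5]; norm_num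
lemma g7 : g 7 = 1144 / 1594323 := by rw [show (7:ℕ) = 6 + 1 from rfl, g_succ, g6]; norm_num
lemma g8 : g 8 = 1430 / 4782969 := by rw [show (8:ℕ) = 7 + 1 from rfl, g_succ, g7]; norm_num

lemma D8_val : Dt 8 = -(657800 / 43046721) := by
  rw [cfD, g8]; norm_num

lemma partial_val : ∑ i ∈ Finset.range 8, Dt i = 335858 / 531441 := by
  rw [Finset.sum_range_succ, Finset.sum_range_succ, Finset.sum_range_succ,
    Finset.sum_range_succ, Finset.sum_range_succ, Finset.sum_range_succ,
    Finset.sum_range_succ, Finset.sum_range_succ, Finset.sum_range_zero]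
  rw [cfD, cfD, cfD, cfD, cfD, cfD, cfD, cfD, g0, g1, g2, g3, g4, g5, g6, g7]
  norm_num

lemma tsum_D_pos : 0 < ∑' n, Dt n := by
  have hD := summable_D
  have hshift : Summable fun i => Dt (i + 8) := (summable_nat_add_iff 8).2 hD
  have hgeo : Summable fun i : ℕ => -Dt 8 * (5 / 6 : ℝ) ^ i :=
    (summable_geometric_of_lt_one (by norm_num) (by norm_num)).mul_left _
  have htail : ∑' i, -Dt (i + 8) ≤ ∑' i : ℕ, -Dt 8 * (5 / 6 : ℝ) ^ i :=
    Summable.tsum_le_tsum (fun i => tail_bound i) hshift.neg hgeo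
  rw [tsum_neg, tsum_mul_left, tsum_geometric_of_lt_one (by norm_num) (by norm_num)] at htail
  rw [D8_val] at htail
  norm_num at htail
  have hsplit : ∑ i ∈ Finset.range 8, Dt i + ∑' i, Dt (i + 8) = ∑' n, Dt n :=
    Summable.sum_add_tsum_nat_add 8 hD
  rw [← hsplit, partial_val]
  linarith

end Stmt18Aux

open Stmt18Aux in
/-- For `α = 3`, `r = 3` the zero-in-bidisk criterion holds. -/
theorem stmt18 :
    2 * F32 3 4 (3 / 2) 2 2 (4 / 9) >
      F32 3 3 (1 / 2) 1 1 (4 / 9) + F32 4 4 (3 / 2) 2 3 (4 / 9) := by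
  have hL : F32 3 4 (3 / 2) 2 2 (4 / 9) = ∑' n, tL n := rfl
  have hA : F32 3 3 (1 / 2) 1 1 (4 / 9) = ∑' n, tA n := rfl
  have hB : F32 4 4 (3 / 2) 2 3 (4 / 9) = ∑' n, tB n := rfl
  have key : 0 < ∑' n, Dt n := tsum_D_pos
  have hsub : ∑' n, Dt n =
      2 * (∑' n, tL n) - (∑' n, tA n) - (∑' n, tB n) := by
    have h1 : Summable fun n => 2 * tL n := summable_tL.mul_left 2
    rw [← tsum_mul_left, ← Summable.tsum_sub h1 summable_tA,
      ← Summable.tsum_sub (h1.sub summable_tA) summable_tB]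
    rfl
  rw [hL, hA, hB]
  rw [hsub] at key
  linarith
end
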